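/- arXiv:1609.05221 — 6 statements merged into one kernel-verified Lean document; each statement's English description precedes it below -/
import Mathlib

section
/- Let A be a finite relational structure. If every F-tolerant power A^I_F (for every set I and filter F on I) admits a homomorphism to A, then A is compact: every structure B of the same type, all of whose finite substructures admit homomorphisms to A, itself admits a homomorphism to A. -/
/-!
Let `I` be the set of all maps `B → A` and `F` the filter on `I` generated by the sets of maps
preserving one fixed tuple of a relation of `B`. Finite intersections of these sets are nonempty
because finite substructures of `B` map to `A`, so `F` is proper. Evaluation `b ↦ (i ↦ i b)` is then
a homomorphism `B → A^I_F` by construction, and composing it with a homomorphism `A^I_F → A`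
gives `B → A`.
-/

/-- A relational type (signature): a set of relation symbols with arities. -/
structure Sig : Type 1 where
  symb : Type
  ar : symb → ℕ

/-- A σ-structure on carrier `A`. -/
structure Str (σ : Sig) (A : Type) : Type where
  rel : ∀ r : σ.symb, (Fin (σ.ar r) → A) → Prop

/-- A homomorphism of σ-structures. -/
def IsHom {σ : Sig} {B A : Type} (SB : Str σ B) (SA : Str σ A) (h : B → A) : Prop :=
  ∀ (r : σ.symb) (t : Fin (σ.ar r) → B), SB.rel r t → SA.rel r (fun j => h (t j))

/-- The F-tolerant power `A^I_F`. -/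
def tolPow {σ : Sig} {A : Type} (SA : Str σ A) (I : Type) (F : Filter I) : Str σ (I → A) :=
  ⟨fun r t => {i | SA.rel r (fun j => t j i)} ∈ F⟩

/-- `A` is compact: every structure all of whose finite (induced) substructures admit
homomorphisms to `A` itself admits a homomorphism to `A`. -/
def StrCompact {σ : Sig} {A : Type} (SA : Str σ A) : Prop :=
  ∀ (B : Type) (SB : Str σ B),
    (∀ S : Finset B, ∃ h : B → A, ∀ (r : σ.symb) (t : Fin (σ.ar r) → B),
      SB.rel r t → (∀ j, t j ∈ S) → SA.rel r (fun j => h (t j))) →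
    ∃ h : B → A, IsHom SB SA h

open Filter

variable {σ : Sig} {A B C : Type}

theorem IsHom.comp {SA : Str σ A} {SB : Str σ B} {SC : Str σ C} {g : B → C} {f : A → B}
    (hg : IsHom SB SC g) (hf : IsHom SA SB f) : IsHom SA SC (g ∘ f) :=
  fun r t ht => hg r _ (hf r t ht)

def FinitelyHomTo (SB : Str σ B) (SA : Str σ A) : Prop :=
  ∀ S : Finset B, ∃ h : B → A, ∀ (r : σ.symb) (t : Fin (σ.ar r) → B),
    SB.rel r t → (∀ j, t j ∈ S) → SA.rel r (fun j => h (t j))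

abbrev RelTuple (SB : Str σ B) : Type :=
  Σ r : σ.symb, {t : Fin (σ.ar r) → B // SB.rel r t}

-- The set `(R, x)⁺` of the paper, for `p = ⟨R, x, _⟩`.
def preservingMaps (SA : Str σ A) {SB : Str σ B} (p : RelTuple SB) : Set (B → A) :=
  {i | SA.rel p.1 (fun j => i (p.2.1 j))}

def homFilter (SB : Str σ B) (SA : Str σ A) : Filter (B → A) :=
  ⨅ p : RelTuple SB, 𝓟 (preservingMaps SA p)

theorem homFilter_neBot {SB : Str σ B} {SA : Str σ A} (hfin : FinitelyHomTo SB SA) :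
    (homFilter SB SA).NeBot := by
  refine (hasBasis_iInf_principal_finite _).neBot_iff.2 fun {T} hT => ?_
  have hS : (⋃ p ∈ T, Set.range p.2.1).Finite := hT.biUnion fun _ _ => Set.finite_range _
  obtain ⟨h, hh⟩ := hfin hS.toFinset
  refine ⟨h, Set.mem_iInter₂.2 fun p hp => hh p.1 p.2.1 p.2.2 fun j => ?_⟩
  rw [Set.Finite.mem_toFinset]
  exact Set.mem_biUnion hp ⟨j, rfl⟩

theorem isHom_eval_tolPow_homFilter (SB : Str σ B) (SA : Str σ A) :
    IsHom SB (tolPow SA (B → A) (homFilter SB SA)) (fun b i => i b) :=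
  fun r t ht => mem_iInf_of_mem ⟨r, t, ht⟩ (mem_principal_self _)

theorem stmt1_general (σ : Sig) (A : Type) (SA : Str σ A)
    (h : ∀ (I : Type) (F : Filter I), F.NeBot →
      ∃ φ : (I → A) → A, IsHom (tolPow SA I F) SA φ) :
    StrCompact SA := by
  intro B SB hfin
  obtain ⟨φ, hφ⟩ := h (B → A) (homFilter SB SA) (homFilter_neBot hfin)
  exact ⟨φ ∘ fun b i => i b, hφ.comp (isHom_eval_tolPow_homFilter SB SA)⟩

/-- If every tolerant power of the finite structure `A` (over a proper filter)
admits a homomorphism to `A`, then `A` is compact. -/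
theorem stmt1 (σ : Sig) (A : Type) [Finite A] (SA : Str σ A)
    (h : ∀ (I : Type) (F : Filter I), F.NeBot →
      ∃ φ : (I → A) → A, IsHom (tolPow SA I F) SA φ) :
    StrCompact SA :=
  stmt1_general σ A SA h
end

section
/- Let n ≥ 3, let F be a filter on a set I, and suppose the F-tolerant power (K_n)^I_F of the complete graph K_n admits a graph homomorphism φ to K_n with φ fixing the constant functions (φ(const_k) = k for all k < n). Then the family U = {X ⊆ I : φ(1_X) = 1} is an ultrafilter on I containing F, where 1_X is the characteristic function of X (with values in {0,1}). -/
open Classical in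
/-- The characteristic function of `X ⊆ I` with values `0, 1` in `Fin n`. -/
noncomputable def charFn {I : Type} (n : ℕ) [NeZero n] (X : Set I) : I → Fin n :=
  fun i => if i ∈ X then 1 else 0

/-!
A function avoiding a colour `k` is adjacent to the constant `k`, so `φ` maps `{0, 1, 2}`-valued
functions to `{0, 1, 2}` and restricts to a map of the same kind for `n = 3`. For `n = 3` the shifts
`g, g + 1, g + 2` of any `g : I → Fin 3` are pairwise adjacent, so they receive all three colours
and one of them receives `1`. Since `1_X` and `1_Xᶜ` are adjacent and coloured in `{0, 1}`, exactly
one of `X`, `Xᶜ` lies in `U`. If `X, Y, (X ∩ Y)ᶜ` all lay in `U`, a suitable `g` has each shift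
adjacent to one of their indicators, so no shift would receive `1`; hence `U` is closed under
intersections. A set `X ∈ F` lies in `U` because `1_X` is `F`-adjacent to the constant `0`.
-/

open Function

namespace Ultrafilter

variable {α : Type*}

def ofInterCompl (p : Set α → Prop) (inter : ∀ {s t}, p s → p t → p (s ∩ t))
    (compl : ∀ s, p sᶜ ↔ ¬p s) (empty : ¬p ∅) : Ultrafilter α :=
  ofComplNotMemIff
    { sets := {s | p s}
      univ_sets := by simpa using (compl ∅).2 empty
      sets_of_superset := fun {s t} hs hst => by
        by_contra ht
        exact empty (Set.sdiff_eq_empty.2 hst ▸ inter hs ((compl t).2 ht))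
      inter_sets := inter }
    fun s => by
      change ¬p sᶜ ↔ p s
      rw [compl, not_not]

theorem mem_ofInterCompl {p : Set α → Prop} {inter : ∀ {s t}, p s → p t → p (s ∩ t)}
    {compl : ∀ s, p sᶜ ↔ ¬p s} {empty : ¬p ∅} {s : Set α} :
    s ∈ ofInterCompl p inter compl empty ↔ p s :=
  Iff.rfl

end Ultrafilter

section Polymorphism

variable {I α β : Type*} {φ : (I → α) → α}

theorem apply_ne_of_forall_ne {F : Filter I}
    (hφ : ∀ f g : I → α, {i | f i ≠ g i} ∈ F → φ f ≠ φ g) {f g : I → α}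
    (h : ∀ i, f i ≠ g i) : φ f ≠ φ g :=
  hφ f g (Filter.mem_of_superset Filter.univ_mem fun i _ => h i)

theorem apply_mem_of_forall_mem (hφ : ∀ f g : I → α, (∀ i, f i ≠ g i) → φ f ≠ φ g)
    (hconst : ∀ k, φ (fun _ => k) = k) {S : Set α} {f : I → α} (hf : ∀ i, f i ∈ S) :
    φ f ∈ S := by
  by_contra h
  exact hφ f (fun _ => φ f) (fun i hi => h (hi ▸ hf i)) (hconst (φ f)).symm

theorem surjective_apply_add_const [AddGroup α] [Finite α]
    (hφ : ∀ f g : I → α, (∀ i, f i ≠ g i) → φ f ≠ φ g) (g : I → α) :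
    Surjective fun c : α => φ (fun i => g i + c) :=
  Finite.injective_iff_surjective.1 fun c d hcd => by
    by_contra h
    exact hφ _ _ (fun i => (add_right_injective (g i)).ne h) hcd

noncomputable def restrictAlong [Nonempty β] (e : β → α) (φ : (I → α) → α) :
    (I → β) → β :=
  fun g => invFun e (φ (e ∘ g))

variable [Nonempty β] {e : β → α}

theorem apply_restrictAlong (hφ : ∀ f g : I → α, (∀ i, f i ≠ g i) → φ f ≠ φ g)
    (hconst : ∀ k, φ (fun _ => k) = k) (g : I → β) :
    e (restrictAlong e φ g) = φ (e ∘ g) :=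
  invFun_eq (apply_mem_of_forall_mem hφ hconst (S := Set.range e) fun i => ⟨g i, rfl⟩)

theorem restrictAlong_ne {F : Filter I}
    (hφ : ∀ f g : I → α, {i | f i ≠ g i} ∈ F → φ f ≠ φ g) (hconst : ∀ k, φ (fun _ => k) = k)
    (he : Injective e) (g g' : I → β) (h : {i | g i ≠ g' i} ∈ F) :
    restrictAlong e φ g ≠ restrictAlong e φ g' := by
  have hφ_pointwise := fun f g => apply_ne_of_forall_ne hφ (f := f) (g := g)
  intro heq
  refine hφ (e ∘ g) (e ∘ g') (by simpa only [comp_apply, he.ne_iff] using h) ?_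
  rw [← apply_restrictAlong (e := e) hφ_pointwise hconst, heq,
    apply_restrictAlong (e := e) hφ_pointwise hconst]

theorem restrictAlong_const (hφ : ∀ f g : I → α, (∀ i, f i ≠ g i) → φ f ≠ φ g)
    (hconst : ∀ k, φ (fun _ => k) = k) (he : Injective e) (k : β) :
    restrictAlong e φ (fun _ => k) = k :=
  he ((apply_restrictAlong hφ hconst _).trans (hconst (e k)))

end Polymorphism

section Fin3

variable {I : Type} {ψ : (I → Fin 3) → Fin 3}

theorem charFn_mem {n : ℕ} [NeZero n] (X : Set I) (i : I) :
    charFn n X i ∈ ({0, 1} : Set (Fin n)) := by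
  unfold charFn; split_ifs <;> simp

theorem charFn_compl_ne (X : Set I) (i : I) : charFn 3 Xᶜ i ≠ charFn 3 X i := by
  by_cases h : i ∈ X <;> simp [charFn, h]

theorem apply_charFn_compl_eq_one_iff (hψ : ∀ f g : I → Fin 3, (∀ i, f i ≠ g i) → ψ f ≠ ψ g)
    (hconst : ∀ k, ψ (fun _ => k) = k) (X : Set I) :
    ψ (charFn 3 Xᶜ) = 1 ↔ ψ (charFn 3 X) ≠ 1 := by
  have hne := hψ _ _ (charFn_compl_ne X)
  rcases apply_mem_of_forall_mem hψ hconst (charFn_mem Xᶜ) with h | h <;>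
    rcases apply_mem_of_forall_mem hψ hconst (charFn_mem X) with h' | h' <;>
    simp_all

theorem apply_charFn_empty (hconst : ∀ k, ψ (fun _ => k) = k) :
    ψ (charFn 3 (∅ : Set I)) = 0 := by
  have : charFn 3 (∅ : Set I) = fun _ => 0 := by
    funext i
    simp [charFn]
  rw [this, hconst]

theorem apply_charFn_eq_one_of_mem {F : Filter I}
    (hψ : ∀ f g : I → Fin 3, {i | f i ≠ g i} ∈ F → ψ f ≠ ψ g) (hconst : ∀ k, ψ (fun _ => k) = k)
    {X : Set I} (hX : X ∈ F) : ψ (charFn 3 X) = 1 := by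
  have hne : ψ (charFn 3 X) ≠ 0 := by
    refine hconst 0 ▸ hψ _ _ (Filter.mem_of_superset hX fun i hi => ?_)
    simp [charFn, hi]
  exact (apply_mem_of_forall_mem (fun f g => apply_ne_of_forall_ne hψ) hconst
    (charFn_mem X)).resolve_left hne

theorem apply_charFn_inter (hψ : ∀ f g : I → Fin 3, (∀ i, f i ≠ g i) → ψ f ≠ ψ g)
    (hconst : ∀ k, ψ (fun _ => k) = k) {X Y : Set I}
    (hX : ψ (charFn 3 X) = 1) (hY : ψ (charFn 3 Y) = 1) : ψ (charFn 3 (X ∩ Y)) = 1 := by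
  by_contra hXY
  have hW := (apply_charFn_compl_eq_one_iff hψ hconst _).2 hXY
  classical
  let g : I → Fin 3 := fun i => if i ∈ X then if i ∈ Y then 2 else 0 else 1
  have hg : ∀ i, g i + 0 ≠ charFn 3 X i ∧ g i + 1 ≠ charFn 3 Y i ∧
      g i + 2 ≠ charFn 3 (X ∩ Y)ᶜ i := by
    intro i
    by_cases hi : i ∈ X <;> by_cases hi' : i ∈ Y <;> simp [g, charFn, hi, hi']
  obtain ⟨c, hc⟩ := surjective_apply_add_const hψ g 1
  fin_cases c
  · exact hψ _ _ (fun i => (hg i).1) (hc.trans hX.symm)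
  · exact hψ _ _ (fun i => (hg i).2.1) (hc.trans hY.symm)
  · exact hψ _ _ (fun i => (hg i).2.2) (hc.trans hW.symm)

theorem exists_ultrafilter_of_fin_three {F : Filter I}
    (hψ : ∀ f g : I → Fin 3, {i | f i ≠ g i} ∈ F → ψ f ≠ ψ g)
    (hconst : ∀ k, ψ (fun _ => k) = k) :
    ∃ U : Ultrafilter I, (↑U : Filter I) ≤ F ∧ ∀ X : Set I, X ∈ U ↔ ψ (charFn 3 X) = 1 := by
  have hψ_pointwise := fun f g => apply_ne_of_forall_ne hψ (f := f) (g := g)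
  exact ⟨.ofInterCompl (fun X => ψ (charFn 3 X) = 1) (apply_charFn_inter hψ_pointwise hconst)
      (apply_charFn_compl_eq_one_iff hψ_pointwise hconst) (by simp [apply_charFn_empty hconst]),
    fun _ => apply_charFn_eq_one_of_mem hψ hconst, fun _ => Ultrafilter.mem_ofInterCompl⟩

end Fin3

theorem Fin.castLE_one {m n : ℕ} [NeZero m] [NeZero n] (hm : 2 ≤ m) (h : m ≤ n) :
    Fin.castLE h 1 = 1 := by
  simp [Fin.ext_iff, Nat.mod_eq_of_lt (by omega : 1 < m), Nat.mod_eq_of_lt (by omega : 1 < n)]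

theorem Fin.castLE_comp_charFn {I : Type} {m n : ℕ} [NeZero m] [NeZero n] (hm : 2 ≤ m)
    (h : m ≤ n) (X : Set I) : Fin.castLE h ∘ charFn m X = charFn n X := by
  funext i
  by_cases hi : i ∈ X
  · simp [charFn, hi, Fin.castLE_one hm]
  · simp [charFn, hi, Fin.ext_iff]

theorem stmt7_general (n : ℕ) [NeZero n] (hn : 3 ≤ n) (I : Type) (F : Filter I)
    (φ : (I → Fin n) → Fin n)
    (hφ : ∀ f g : I → Fin n, {i | f i ≠ g i} ∈ F → φ f ≠ φ g)
    (hconst : ∀ k : Fin n, φ (fun _ => k) = k) :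
    ∃ U : Ultrafilter I, (↑U : Filter I) ≤ F ∧
      ∀ X : Set I, X ∈ U ↔ φ (charFn n X) = 1 := by
  have he := Fin.castLE_injective hn
  have hφ_pointwise := fun f g => apply_ne_of_forall_ne hφ (f := f) (g := g)
  obtain ⟨U, hUF, hU⟩ := exists_ultrafilter_of_fin_three (restrictAlong_ne hφ hconst he)
    (restrictAlong_const hφ_pointwise hconst he)
  refine ⟨U, hUF, fun X => ?_⟩
  rw [hU, ← he.eq_iff, apply_restrictAlong (e := Fin.castLE hn) hφ_pointwise hconst,
    Fin.castLE_comp_charFn (by norm_num) hn, Fin.castLE_one (by norm_num) hn]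

/-- Greenwell–Lovász / Läuchli key lemma: if `φ` is a homomorphism
`(K_n)^I_F → K_n` (`n ≥ 3`) fixing the constant functions, then
`U = {X : φ(1_X) = 1}` is an ultrafilter containing `F`. -/
theorem stmt7 (n : ℕ) [NeZero n] (hn : 3 ≤ n) (I : Type) (F : Filter I) [F.NeBot]
    (φ : (I → Fin n) → Fin n)
    (hφ : ∀ f g : I → Fin n, {i | f i ≠ g i} ∈ F → φ f ≠ φ g)
    (hconst : ∀ k : Fin n, φ (fun _ => k) = k) :
    ∃ U : Ultrafilter I, (↑U : Filter I) ≤ F ∧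
      ∀ X : Set I, X ∈ U ↔ φ (charFn n X) = 1 :=
  stmt7_general n hn I F φ hφ hconst
end

section
/- Let A be a structure with universe {0,…,n−1}, n ≥ 3, such that K_n is primitively positively definable from A: there is a finite σ-structure B with distinguished elements x, y such that R_{(B,x,y)} = {(φ(x),φ(y)) : φ a homomorphism B → A} equals the relation ≠ on {0,…,n−1}. If for a filter F on I there is a homomorphism φ : A^I_F → A, then the same map φ is a graph homomorphism (K_n)^I_F → K_n. -/
/-- The relation `R_{(B,x,y)}`. -/
def ppRel {σ : Sig} {β α : Type} (SB : Str σ β) (SA : Str σ α) (x y : β) : Set (α × α) :=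
  {p | ∃ ψ : β → α, IsHom SB SA ψ ∧ ψ x = p.1 ∧ ψ y = p.2}

section

variable {σ : Sig} {α β γ : Type}

theorem IsHom.comp_s10 {SA : Str σ α} {SB : Str σ β} {SC : Str σ γ} {h : β → γ} {g : α → β}
    (hh : IsHom SB SC h) (hg : IsHom SA SB g) : IsHom SA SC (h ∘ g) :=
  fun r t ht => hh r _ (hg r t ht)

theorem ppRel_map {SB : Str σ β} {SA : Str σ α} {SC : Str σ γ} {x y : β} {φ : α → γ}
    (hφ : IsHom SA SC φ) {p : α × α} (hp : p ∈ ppRel SB SA x y) :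
    (φ p.1, φ p.2) ∈ ppRel SB SC x y := by
  obtain ⟨ψ, hψ, hx, hy⟩ := hp
  exact ⟨φ ∘ ψ, hφ.comp_s10 hψ, congrArg φ hx, congrArg φ hy⟩

theorem isHom_tolPow_of_eventually {SB : Str σ β} {SA : Str σ α} {I : Type} {F : Filter I}
    {Ψ : β → I → α} (h : ∀ᶠ i in F, IsHom SB SA (fun b => Ψ b i)) :
    IsHom SB (tolPow SA I F) Ψ :=
  fun r t ht => h.mono fun _ hi => hi r t ht

/-- Off a set in `F` the tolerant power imposes no relations, so there `Ψ` only has to send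
`x` and `y` to the common value `f i = g i`. -/
theorem mem_ppRel_tolPow {SB : Str σ β} {SA : Str σ α} {x y : β} {I : Type} {F : Filter I}
    {f g : I → α} (hR : ∀ᶠ i in F, (f i, g i) ∈ ppRel SB SA x y)
    (hdiag : ∀ i, (f i, g i) ∉ ppRel SB SA x y → f i = g i) :
    (f, g) ∈ ppRel SB (tolPow SA I F) x y := by
  classical
  choose ψ hψ hψx hψy using fun i (hi : (f i, g i) ∈ ppRel SB SA x y) => hi
  let Ψ : β → I → α := fun b i =>
    if hi : (f i, g i) ∈ ppRel SB SA x y then ψ i hi b else f i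
  refine ⟨Ψ, isHom_tolPow_of_eventually ?_, funext fun i => ?_, funext fun i => ?_⟩
  · filter_upwards [hR] with i hi
    simpa only [Ψ, dif_pos hi] using hψ i hi
  · by_cases hi : (f i, g i) ∈ ppRel SB SA x y
    · simpa only [Ψ, dif_pos hi] using hψx i hi
    · simp only [Ψ, dif_neg hi]
  · by_cases hi : (f i, g i) ∈ ppRel SB SA x y
    · simpa only [Ψ, dif_pos hi] using hψy i hi
    · simp only [Ψ, dif_neg hi, hdiag i hi]

end

theorem stmt10_general (n : ℕ) (σ : Sig) (SA : Str σ (Fin n))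
    (β : Type) (SB : Str σ β) (x y : β)
    (hdef : ∀ a b : Fin n, a ≠ b ↔ ∃ ψ : β → Fin n, IsHom SB SA ψ ∧ ψ x = a ∧ ψ y = b)
    (I : Type) (F : Filter I)
    (φ : (I → Fin n) → Fin n) (hφ : IsHom (tolPow SA I F) SA φ) :
    ∀ f g : I → Fin n, {i | f i ≠ g i} ∈ F → φ f ≠ φ g := by
  have hR : ∀ a b : Fin n, (a, b) ∈ ppRel SB SA x y ↔ a ≠ b := fun a b => (hdef a b).symm
  intro f g hfg
  have hfg' : (f, g) ∈ ppRel SB (tolPow SA I F) x y :=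
    mem_ppRel_tolPow (Filter.mem_of_superset hfg fun _ => (hR _ _).2)
      fun i hi => not_not.1 (mt (hR _ _).2 hi)
  exact (hR _ _).1 (ppRel_map hφ hfg')

/-- If `K_n` (`n ≥ 3`) is primitively positively definable from `A` (via a finite
structure `B` with distinguished elements `x, y`), then any homomorphism
`A^I_F → A` is also a graph homomorphism `(K_n)^I_F → K_n`. -/
theorem stmt10 (n : ℕ) (hn : 3 ≤ n) (σ : Sig) (SA : Str σ (Fin n))
    (β : Type) [Finite β] (SB : Str σ β) (x y : β)
    (hdef : ∀ a b : Fin n, a ≠ b ↔ ∃ ψ : β → Fin n, IsHom SB SA ψ ∧ ψ x = a ∧ ψ y = b)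
    (I : Type) (F : Filter I) [F.NeBot]
    (φ : (I → Fin n) → Fin n) (hφ : IsHom (tolPow SA I F) SA φ) :
    ∀ f g : I → Fin n, {i | f i ≠ g i} ∈ F → φ f ≠ φ g :=
  stmt10_general n σ SA β SB x y hdef I F φ hφ
end

section
/- Let C_n (n ≥ 2) be the directed n-cycle and F a filter on I. In the quotient (C_n)^I_F/∼ (where f ∼ g iff {i : f(i)=g(i)} ∈ F, and f → g iff {i : g(i) = f(i)+1 mod n} ∈ F), each connected component is isomorphic to C_n; equivalently, for every f, the classes of f, f+1, …, f+(n−1) (pointwise addition mod n) are distinct and form a directed n-cycle, and every g in the component of f is ∼-equivalent to some f+k. -/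
namespace Filter

variable {I G : Type*} {F : Filter I}

theorem Eventually.add_left_cancel_const [AddLeftCancelSemigroup G] [F.NeBot] {f : I → G}
    {k l : G} (h : ∀ᶠ i in F, f i + k = f i + l) : k = l :=
  let ⟨_, hkl⟩ := (h.mono fun _ => add_left_cancel).exists
  hkl

def EventuallyShift [Add G] (F : Filter I) (u v : I → G) : Prop :=
  ∃ k : G, ∀ᶠ i in F, v i = u i + k

theorem equivalence_eventuallyShift [AddGroup G] :
    Equivalence (EventuallyShift (G := G) F) where
  refl _ := ⟨0, .of_forall fun _ => (add_zero _).symm⟩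
  symm := fun ⟨k, hk⟩ => ⟨-k, hk.mono fun _ hi => by rw [hi, add_neg_cancel_right]⟩
  trans := fun ⟨k, hk⟩ ⟨l, hl⟩ =>
    ⟨k + l, (hk.and hl).mono fun _ ⟨hi, hj⟩ => by rw [hj, hi, add_assoc]⟩

theorem eventuallyShift_of_eqvGen [AddGroup G] {c : G} {u v : I → G}
    (h : Relation.EqvGen (fun u v : I → G => ∀ᶠ i in F, v i = u i + c) u v) :
    EventuallyShift F u v :=
  equivalence_eventuallyShift.eqvGen_iff.mp (h.mono fun _ _ huv => ⟨c, huv⟩)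

end Filter

theorem stmt12_general (n : ℕ) (I : Type) (F : Filter I) [F.NeBot]
    (f : I → ZMod n) :
    (∀ k l : ZMod n, {i | f i + k = f i + l} ∈ F → k = l) ∧
    (∀ k : ZMod n, {i | f i + (k + 1) = (f i + k) + 1} ∈ F) ∧
    (∀ g : I → ZMod n,
      Relation.EqvGen (fun u v : I → ZMod n => {i | v i = u i + 1} ∈ F) f g →
      ∃ k : ZMod n, {i | g i = f i + k} ∈ F) :=
  ⟨fun _ _ h => Filter.Eventually.add_left_cancel_const h,
    fun _ => Filter.univ_mem' fun _ => (add_assoc _ _ _).symm,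
    fun _ hg => Filter.eventuallyShift_of_eqvGen hg⟩

/-- In `(C_n)^I_F` modulo `∼` (for a proper filter `F`), the component of any `f`
is a directed `n`-cycle: the classes `f, f+1, …, f+(n−1)` are pairwise distinct,
consecutive ones are joined by edges, and every `g` in the connected component of
`f` is `∼`-equivalent to some `f + k`. -/
theorem stmt12 (n : ℕ) (hn : 2 ≤ n) (I : Type) (F : Filter I) [F.NeBot]
    (f : I → ZMod n) :
    (∀ k l : ZMod n, {i | f i + k = f i + l} ∈ F → k = l) ∧
    (∀ k : ZMod n, {i | f i + (k + 1) = (f i + k) + 1} ∈ F) ∧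
    (∀ g : I → ZMod n,
      Relation.EqvGen (fun u v : I → ZMod n => {i | v i = u i + 1} ∈ F) f g →
      ∃ k : ZMod n, {i | g i = f i + k} ∈ F) :=
  stmt12_general n I F f
end

section
/- Each connected component of the quotient (C_n)^I_F/∼ admits exactly n homomorphisms to C_n. -/
/-- The setoid `f ∼ g ↔ {i | f i = g i} ∈ F` on `A^I`. -/
def tolSetoid (A I : Type) (F : Filter I) : Setoid (I → A) where
  r f g := {i | f i = g i} ∈ F
  iseqv := by
    refine ⟨fun f => ?_, fun {f g} h => ?_, fun {f g h} hfg hgh => ?_⟩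
    · simpa using F.univ_mem
    · simpa [eq_comm] using h
    · filter_upwards [hfg, hgh] with i h1 h2 using h1.trans h2

/-- The edge relation of the quotient `(C_n)^I_F/∼`. -/
def Rq (n : ℕ) (I : Type) (F : Filter I) :
    Quotient (tolSetoid (ZMod n) I F) → Quotient (tolSetoid (ZMod n) I F) → Prop :=
  fun a b => ∃ u v : I → ZMod n,
    Quotient.mk (tolSetoid (ZMod n) I F) u = a ∧
    Quotient.mk (tolSetoid (ZMod n) I F) v = b ∧ {i | v i = u i + 1} ∈ F

/-!
The quotient is the group of germs `F.Germ (ZMod n)`, and an edge `a → b` means `b = a + 1`.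
Along a component the difference `a - a₀` therefore stays a constant germ `↑c`, and since `F`
is proper, `a ↦ c` is a well-defined homomorphism to `C_n`. Two homomorphisms on a connected
graph differ by a constant, so homomorphisms are determined by their value at `a₀`.
-/

open Filter Relation

theorem Relation.EqvGen.sub_mem_zmultiples {G : Type*} [AddCommGroup G] {r : G → G → Prop}
    {t : G} (hr : ∀ a b, r a b → b = a + t) {a b : G} (h : EqvGen r a b) :
    b - a ∈ AddSubgroup.zmultiples t := by
  induction h with
  | rel a b hab => rw [hr a b hab, add_sub_cancel_left]; exact AddSubgroup.mem_zmultiples t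
  | refl a => rw [sub_self]; exact zero_mem _
  | symm a b _ ih => rw [← neg_sub]; exact neg_mem ih
  | trans a b c _ _ ih₁ ih₂ => rw [← sub_add_sub_cancel c b a]; exact add_mem ih₂ ih₁

theorem Relation.EqvGen.apply_eq_apply_base {α β : Type*} {r : α → α → Prop} {a₀ : α}
    (f : {a // EqvGen r a₀ a} → β) (hf : ∀ x y, r x.1 y.1 → f x = f y)
    (x : {a // EqvGen r a₀ a}) : f x = f ⟨a₀, .refl a₀⟩ := by
  suffices ∀ a b, EqvGen r a b → ∀ ha hb, f ⟨a, ha⟩ = f ⟨b, hb⟩ from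
    (this a₀ x.1 x.2 _ x.2).symm
  intro a b h
  induction h with
  | rel a b hab => exact fun ha hb => hf ⟨a, ha⟩ ⟨b, hb⟩ hab
  | refl a => exact fun _ _ => rfl
  | symm a b _ ih => exact fun hb ha => (ih ha hb).symm
  | trans a b c hab _ ih₁ ih₂ =>
    exact fun ha hc => (ih₁ ha _).trans (ih₂ (ha.trans _ _ _ hab) hc)

def Relation.EqvGen.componentHomEquiv {α β : Type*} [AddGroup β] {r : α → α → Prop}
    {a₀ : α} {s : β} (Δ : {a // EqvGen r a₀ a} → β)
    (hΔ : ∀ x y, r x.1 y.1 → Δ y = Δ x + s) :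
    {φ : {a // EqvGen r a₀ a} → β // ∀ x y, r x.1 y.1 → φ y = φ x + s} ≃ β where
  toFun φ := φ.1 ⟨a₀, .refl a₀⟩ - Δ ⟨a₀, .refl a₀⟩
  invFun c := ⟨fun x => c + Δ x, fun x y h =>
    show c + Δ y = c + Δ x + s by rw [hΔ x y h, add_assoc]⟩
  left_inv φ := by
    refine Subtype.ext (funext fun x => ?_)
    have hconst := EqvGen.apply_eq_apply_base (fun x => φ.1 x - Δ x)
      (fun x y h => by rw [φ.2 x y h, hΔ x y h, add_sub_add_right_eq_sub]) x
    exact eq_sub_iff_add_eq.mp hconst.symm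
  right_inv c := add_sub_cancel_right c _

section Germ

variable {n : ℕ} {I : Type} {F : Filter I}

/- `Quotient (tolSetoid A I F)` is definitionally `F.Germ A`, whose group structure we use. -/

theorem rq_iff_eq_add_one (a b : F.Germ (ZMod n)) : Rq n I F a b ↔ b = a + ↑(1 : ZMod n) := by
  constructor
  · rintro ⟨u, v, rfl, rfl, h⟩
    exact Germ.coe_eq.mpr h
  · induction a using Germ.inductionOn with | h u => ?_
    induction b using Germ.inductionOn with | h v => ?_
    exact fun h => ⟨u, v, rfl, rfl, Germ.coe_eq.mp h⟩

theorem exists_const_eq_sub_of_eqvGen {a₀ a : F.Germ (ZMod n)} (h : EqvGen (Rq n I F) a₀ a) :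
    ∃ c : ZMod n, (c : F.Germ (ZMod n)) = a - a₀ := by
  obtain ⟨k, hk⟩ := AddSubgroup.mem_zmultiples_iff.mp
    (h.sub_mem_zmultiples fun a b hab => (rq_iff_eq_add_one a b).mp hab)
  exact ⟨k • 1, by rw [Germ.const_smul, hk]⟩

theorem exists_hom_rq_component [F.NeBot] (a₀ : F.Germ (ZMod n)) :
    ∃ Δ : {a : F.Germ (ZMod n) // EqvGen (Rq n I F) a₀ a} → ZMod n,
      ∀ x y, Rq n I F x.1 y.1 → Δ y = Δ x + 1 := by
  choose Δ hΔ using fun x : {a : F.Germ (ZMod n) // EqvGen (Rq n I F) a₀ a} =>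
    exists_const_eq_sub_of_eqvGen x.2
  refine ⟨Δ, fun x y hxy => eq_add_of_sub_eq' ((Germ.const_inj (l := F)).mp ?_)⟩
  rw [Germ.const_sub, hΔ, hΔ, sub_sub_sub_cancel_right, (rq_iff_eq_add_one _ _).mp hxy,
    add_sub_cancel_left]

end Germ

theorem stmt14_general (n : ℕ) (I : Type) (F : Filter I) [F.NeBot]
    (a₀ : Quotient (tolSetoid (ZMod n) I F)) :
    Nat.card {φ : {a : Quotient (tolSetoid (ZMod n) I F) //
        Relation.EqvGen (Rq n I F) a₀ a} → ZMod n //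
      ∀ x y, Rq n I F x.1 y.1 → φ y = φ x + 1} = n := by
  obtain ⟨Δ, hΔ⟩ := exists_hom_rq_component (F := F) a₀
  exact (Nat.card_congr (EqvGen.componentHomEquiv Δ hΔ)).trans (Nat.card_zmod n)

/-- Each connected component of `(C_n)^I_F/∼` admits exactly `n` homomorphisms
to `C_n`. -/
theorem stmt14 (n : ℕ) (hn : 2 ≤ n) (I : Type) (F : Filter I) [F.NeBot]
    (a₀ : Quotient (tolSetoid (ZMod n) I F)) :
    Nat.card {φ : {a : Quotient (tolSetoid (ZMod n) I F) //
        Relation.EqvGen (Rq n I F) a₀ a} → ZMod n //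
      ∀ x y, Rq n I F x.1 y.1 → φ y = φ x + 1} = n :=
  stmt14_general n I F a₀
end

section
/- If the directed cycle C_{kp} is compact (k, p ≥ 2), then C_p is compact. More precisely: if for a filter F on I there is a homomorphism φ : (C_{kp})^I_F → C_{kp}, then the map ψ sending f : I → Z_p to the unique j ∈ Z_p with φ(kf) ∈ {kj, kj+1, …, kj+k−1} (where (kf)(i) = k·f(i)) is a homomorphism (C_p)^I_F → C_p. -/
/-- Compactness of the directed `n`-cycle `C_n` (relation `{(i, i+1)}` on `ZMod n`):
every binary-relational structure all of whose finite (induced) substructures admit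
homomorphisms to `C_n` itself admits a homomorphism to `C_n`. -/
def CycCompact (n : ℕ) : Prop :=
  ∀ (B : Type) (r : B → B → Prop),
    (∀ S : Finset B, ∃ h : B → ZMod n, ∀ x ∈ S, ∀ y ∈ S, r x y → h y = h x + 1) →
    ∃ h : B → ZMod n, ∀ x y : B, r x y → h y = h x + 1

/-!
Compactness of `C_n` amounts to the existence of a homomorphism `φ : (C_n)^I_F → C_n` for every
proper filter `F`. Given one for `C_{kp}`, stretch `f : I → ZMod p` to `kf : I → ZMod (kp)`. If
`(f, g)` is an edge of `(C_p)^I_F`, then `kf, kf + 1, …, kf + (k - 1)` is a path of edges ending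
at an edge into `kg`, so `φ(kg) = φ(kf) + k`. Adding `k` in `ZMod (kp)` moves to the next block
of `k` consecutive residues, so the block index of `φ(kf)` is a homomorphism `(C_p)^I_F → C_p`.
-/

open Filter

/-- A homomorphism from the tolerant power `(C_n)^I_F` to `C_n`. -/
def IsFilterPowerHom {n : ℕ} {I : Type*} (F : Filter I) (φ : (I → ZMod n) → ZMod n) : Prop :=
  ∀ f g : I → ZMod n, {i | g i = f i + 1} ∈ F → φ g = φ f + 1

theorem CycCompact.exists_filterPowerHom {n : ℕ} (hC : CycCompact n) (I : Type) (F : Filter I)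
    [F.NeBot] : ∃ φ : (I → ZMod n) → ZMod n, IsFilterPowerHom F φ := by
  refine hC _ (fun f g : I → ZMod n => {i | g i = f i + 1} ∈ F) fun S => ?_
  have hS : ∀ᶠ i in F, ∀ f ∈ S, ∀ g ∈ S, {i | g i = f i + 1} ∈ F → g i = f i + 1 := by
    simp only [eventually_all_finset, eventually_imp_distrib_left]
    exact fun _ _ _ _ => id
  obtain ⟨i, hi⟩ := hS.exists
  exact ⟨fun f => f i, hi⟩

/-- Finite solutions indexed by `Finset B`, combined along `atTop` by a filter-power
homomorphism, give a global solution. -/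
theorem cycCompact_of_forall_exists_filterPowerHom {n : ℕ}
    (h : ∀ (I : Type) (F : Filter I), F.NeBot → ∃ φ : (I → ZMod n) → ZMod n, IsFilterPowerHom F φ) :
    CycCompact n := by
  classical
  intro B r hfin
  choose sol hsol using hfin
  obtain ⟨φ, hφ⟩ := h (Finset B) atTop atTop_neBot
  refine ⟨fun b => φ (fun S => sol S b), fun x y hxy => hφ _ _ ?_⟩
  filter_upwards [mem_atTop ({x, y} : Finset B)] with S hS
  exact hsol S x (hS (by simp)) y (hS (by simp)) hxy

theorem IsFilterPowerHom.map_add_natCast {n : ℕ} {I : Type*} {F : Filter I}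
    {φ : (I → ZMod n) → ZMod n} (hφ : IsFilterPowerHom F φ) (f : I → ZMod n) (t : ℕ) :
    φ (fun i => f i + t) = φ f + t := by
  induction t with
  | zero => simp
  | succ t ih =>
    have hstep : {i | f i + (t + 1 : ℕ) = f i + t + 1} ∈ F :=
      univ_mem' fun i => by simp only [Set.mem_ofPred_eq]; push_cast; ring
    rw [hφ _ _ hstep, ih]
    push_cast
    ring

def stretch (k : ℕ) {p : ℕ} (x : ZMod p) : ZMod (k * p) := ((k * x.val : ℕ) : ZMod (k * p))

def blockIndex (k : ℕ) {p : ℕ} (x : ZMod (k * p)) : ZMod p := ((x.val / k : ℕ) : ZMod p)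

theorem stretch_add_one {k p : ℕ} (hp : 1 < p) (x : ZMod p) :
    stretch k (x + 1) = stretch k x + (k : ZMod (k * p)) := by
  have : Fact (1 < p) := ⟨hp⟩
  rw [stretch, stretch, ← Nat.cast_add, ZMod.natCast_eq_natCast_iff' _ _ (k * p), ← Nat.mul_add_one,
    Nat.mul_mod_mul_left, Nat.mul_mod_mul_left, ZMod.val_add, ZMod.val_one, Nat.mod_mod]

theorem blockIndex_add_self {k p : ℕ} [NeZero (k * p)] (hk : 0 < k) (x : ZMod (k * p)) :
    blockIndex k (x + (k : ZMod (k * p))) = blockIndex k x + 1 := by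
  rw [blockIndex, blockIndex, ZMod.val_add, ZMod.val_natCast, Nat.add_mod_mod,
    Nat.mod_mul_right_div_self, ZMod.natCast_mod, Nat.add_div_right _ hk, Nat.cast_succ]

theorem IsFilterPowerHom.map_stretch_of_mem {k p : ℕ} {I : Type*} {F : Filter I}
    {φ : (I → ZMod (k * p)) → ZMod (k * p)} (hφ : IsFilterPowerHom F φ) (hk : 0 < k) (hp : 1 < p)
    {f g : I → ZMod p} (hfg : {i | g i = f i + 1} ∈ F) :
    φ (fun i => stretch k (g i)) = φ (fun i => stretch k (f i)) + (k : ZMod (k * p)) := by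
  have hlast : {i | stretch k (g i) = (stretch k (f i) + (k - 1 : ℕ)) + 1} ∈ F := by
    filter_upwards [hfg] with i hi
    rw [hi, stretch_add_one hp, Nat.cast_pred hk]
    ring
  rw [hφ _ _ hlast, hφ.map_add_natCast, Nat.cast_pred hk]
  ring

theorem IsFilterPowerHom.blockIndex_comp_stretch {k p : ℕ} {I : Type*} {F : Filter I}
    {φ : (I → ZMod (k * p)) → ZMod (k * p)} (hφ : IsFilterPowerHom F φ) (hk : 0 < k) (hp : 1 < p) :
    IsFilterPowerHom F fun f : I → ZMod p => blockIndex k (φ fun i => stretch k (f i)) := by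
  have : NeZero (k * p) := ⟨by positivity⟩
  intro f g hfg
  beta_reduce
  rw [hφ.map_stretch_of_mem hk hp hfg, blockIndex_add_self hk]

/-- If `C_{kp}` is compact then `C_p` is compact; more precisely, from a
homomorphism `φ : (C_{kp})^I_F → C_{kp}`, the map sending `f : I → ZMod p` to
`⌊φ(kf).val / k⌋ ∈ ZMod p` is a homomorphism `(C_p)^I_F → C_p`. -/
theorem stmt15 (k p : ℕ) (hk : 2 ≤ k) (hp : 2 ≤ p) :
    (CycCompact (k * p) → CycCompact p) ∧
    ∀ (I : Type) (F : Filter I), F.NeBot →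
      ∀ φ : (I → ZMod (k * p)) → ZMod (k * p),
        (∀ f g : I → ZMod (k * p), {i | g i = f i + 1} ∈ F → φ g = φ f + 1) →
        ∀ f g : I → ZMod p, {i | g i = f i + 1} ∈ F →
          ((((φ (fun i => ((k * (g i).val : ℕ) : ZMod (k * p)))).val / k : ℕ) : ZMod p)) =
          ((((φ (fun i => ((k * (f i).val : ℕ) : ZMod (k * p)))).val / k : ℕ) : ZMod p)) + 1 := by
  have hk0 : 0 < k := by omega
  have hp1 : 1 < p := by omega
  refine ⟨fun hC => cycCompact_of_forall_exists_filterPowerHom fun I F _ => ?_,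
    fun I F _ φ hφ => IsFilterPowerHom.blockIndex_comp_stretch hφ hk0 hp1⟩
  obtain ⟨φ, hφ⟩ := hC.exists_filterPowerHom I F
  exact ⟨_, hφ.blockIndex_comp_stretch hk0 hp1⟩
end
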